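/- (Proposition 5, stability of the discrete divergence.) There exists a constant C > 0, depending only on Ω and the mesh-regularity constant C₀, such that |div_h v_h|_{L²(Ω)} ≤ C ‖v_h‖_h for every v_h ∈ 𝐏₀. -/

import Mathlib

noncomputable section

open MeasureTheory Finset
open scoped Classical ENNReal Topology

/-- The Euclidean plane. -/
abbrev E2 : Type := EuclideanSpace ℝ (Fin 2)

/-- The closed triangle spanned by the three vertices. -/
def triSet (v : Fin 3 → E2) : Set E2 := convexHull ℝ (Set.range v)

/-- The three edges of a triangle, each encoded as the two-element set of its endpoints. -/
def triEdges (v : Fin 3 → E2) : Finset (Finset E2) :=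
  {({v 0, v 1} : Finset E2), ({v 1, v 2} : Finset E2), ({v 0, v 2} : Finset E2)}

/-- The closed segment of an edge. -/
def edgeSet (σ : Finset E2) : Set E2 := convexHull ℝ (σ : Set E2)

/-- The length of an edge. -/
def edgeLen (σ : Finset E2) : ℝ := Metric.diam (σ : Set E2)

/-- The midpoint of an edge. -/
def edgeMid (σ : Finset E2) : E2 := (2⁻¹ : ℝ) • ∑ x ∈ σ, x

/-- The area `|K|` of a triangle. -/
def triArea (v : Fin 3 → E2) : ℝ := (volume (triSet v)).toReal

/-- A conforming triangulation of the closure of `Ω` (a finite set of nondegenerate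
closed triangles covering `closure Ω`, two distinct triangles meeting in nothing, a common
vertex or a common edge, each edge lying in at most two triangles and the edges lying
in a single triangle being contained in the boundary of `Ω`), together with the
circumcenters (assumed to lie inside the triangles, which encodes the hypothesis that
all interior angles are at most `π/2`) and the outward unit normal vectors. -/
structure FVMesh (Ω : Set E2) : Type where
  tris : Finset (Fin 3 → E2)
  indep : ∀ v ∈ tris, AffineIndependent ℝ v
  cover : (⋃ v ∈ tris, triSet v) = closure Ω
  conform : ∀ v ∈ tris, ∀ w ∈ tris, v ≠ w →
      triSet v ∩ triSet w = ∅ ∨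
      (∃ p, p ∈ Set.range v ∧ p ∈ Set.range w ∧ triSet v ∩ triSet w = {p}) ∨
      (∃ σ, σ ∈ triEdges v ∧ σ ∈ triEdges w ∧ triSet v ∩ triSet w = edgeSet σ)
  edge_count : ∀ v ∈ tris, ∀ σ ∈ triEdges v,
      (tris.filter fun w => σ ∈ triEdges w).card = 1 ∨
      (tris.filter fun w => σ ∈ triEdges w).card = 2
  bdry_edge : ∀ v ∈ tris, ∀ σ ∈ triEdges v,
      (tris.filter fun w => σ ∈ triEdges w).card = 1 → edgeSet σ ⊆ frontier Ω
  circ : (Fin 3 → E2) → E2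
  circ_equidist : ∀ v ∈ tris, ∀ i j : Fin 3, dist (circ v) (v i) = dist (circ v) (v j)
  circ_mem : ∀ v ∈ tris, circ v ∈ triSet v
  nrm : (Fin 3 → E2) → Finset E2 → E2
  nrm_unit : ∀ v ∈ tris, ∀ σ ∈ triEdges v, ‖nrm v σ‖ = 1
  nrm_orth : ∀ v ∈ tris, ∀ σ ∈ triEdges v, ∀ a ∈ σ, ∀ b ∈ σ,
      (inner ℝ (nrm v σ) (a - b) : ℝ) = 0
  nrm_outward : ∀ v ∈ tris, ∀ σ ∈ triEdges v, ∀ x ∈ triSet v,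
      (inner ℝ (nrm v σ) (x - edgeMid σ) : ℝ) ≤ 0

/-- A `𝐏₀` (piecewise constant, vector valued) function, encoded by its constant
value on each triangle. -/
abbrev P0fun : Type := (Fin 3 → E2) → E2

/-- A broken scalar function: one function of the space variable for each triangle. -/
abbrev BrokenS : Type := (Fin 3 → E2) → E2 → ℝ

/-- A broken vector-valued function. -/
abbrev BrokenV : Type := (Fin 3 → E2) → E2 → E2

def IsAffineS (g : E2 → ℝ) : Prop := ∃ φ : E2 →ᵃ[ℝ] ℝ, g = ⇑φ

def IsAffineV (g : E2 → E2) : Prop := ∃ φ : E2 →ᵃ[ℝ] E2, g = ⇑φ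

/-- The (classical) divergence of a vector field on the plane. -/
def divF (g : E2 → E2) (x : E2) : ℝ :=
  ∑ i : Fin 2, fderiv ℝ g x (EuclideanSpace.single i 1) i

/-- The (classical) vector Laplacian of a vector field on the plane. -/
def vecLap (g : E2 → E2) (x : E2) : E2 :=
  ∑ i : Fin 2,
    fderiv ℝ (fderiv ℝ g) x (EuclideanSpace.single i 1) (EuclideanSpace.single i 1)

/-- The squared `H¹(Ω)` norm of a vector field. -/
def sobH1Sq (Ω : Set E2) (g : E2 → E2) : ℝ :=
  ∫ x in Ω, (‖g x‖ ^ 2 + ‖fderiv ℝ g x‖ ^ 2)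

/-- The squared `H²(Ω)` norm of a vector field. -/
def sobH2Sq (Ω : Set E2) (g : E2 → E2) : ℝ :=
  ∫ x in Ω, (‖g x‖ ^ 2 + ‖fderiv ℝ g x‖ ^ 2 + ‖fderiv ℝ (fderiv ℝ g) x‖ ^ 2)

/-- The squared `H²(Ω)` norm of a scalar function. -/
def sobH2SqS (Ω : Set E2) (q : E2 → ℝ) : ℝ :=
  ∫ x in Ω, (q x ^ 2 + ‖fderiv ℝ q x‖ ^ 2 + ‖fderiv ℝ (fderiv ℝ q) x‖ ^ 2)

namespace FVMesh

variable {Ω : Set E2} (M : FVMesh Ω)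

/-- The set of all edges of the mesh. -/
def edges : Finset (Finset E2) := M.tris.biUnion triEdges

/-- An interior edge: an edge shared by exactly two triangles. -/
def isIntEdge (σ : Finset E2) : Prop :=
  σ ∈ M.edges ∧ (M.tris.filter fun w => σ ∈ triEdges w).card = 2

/-- A boundary edge: an edge belonging to exactly one triangle. -/
def isExtEdge (σ : Finset E2) : Prop :=
  σ ∈ M.edges ∧ (M.tris.filter fun w => σ ∈ triEdges w).card = 1

def intEdges : Finset (Finset E2) := M.edges.filter fun σ => M.isIntEdge σ

def extEdges : Finset (Finset E2) := M.edges.filter fun σ => M.isExtEdge σ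

/-- `K_σ` : a triangle having `σ` as one of its edges. -/
def Kof (σ : Finset E2) : Fin 3 → E2 :=
  if h : ∃ v, v ∈ M.tris ∧ σ ∈ triEdges v then h.choose else fun _ => 0

/-- The triangle on the other side of the edge `σ` of `K` (for an interior edge). -/
def nbr (σ : Finset E2) (K : Fin 3 → E2) : Fin 3 → E2 :=
  if h : ∃ w, w ∈ M.tris ∧ σ ∈ triEdges w ∧ w ≠ K then h.choose else K

/-- `L_σ` : the second triangle having an interior edge `σ` as one of its edges. -/
def Lof (σ : Finset E2) : Fin 3 → E2 := M.nbr σ (M.Kof σ)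

/-- The circumradius of a triangle. -/
def circumradius (v : Fin 3 → E2) : ℝ := dist (M.circ v) (v 0)

/-- `h` : the maximal circumradius of the triangles of the mesh. -/
def meshSize : ℝ := ⨆ v : M.tris, M.circumradius v

/-- `d_σ`. -/
def dEdge (σ : Finset E2) : ℝ :=
  if M.isIntEdge σ then dist (M.circ (M.Kof σ)) (M.circ (M.Lof σ))
  else dist (edgeMid σ) (M.circ (M.Kof σ))

/-- `τ_σ = |σ| / d_σ`. -/
def tauEdge (σ : Finset E2) : ℝ := edgeLen σ / M.dEdge σ

/-- Mesh regularity with constant `C₀` : `dist(x_{K_σ}, σ) ≥ C₀ |σ|` and `|σ| ≥ C₀ h`. -/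
def regular (C₀ : ℝ) : Prop :=
  ∀ σ ∈ M.edges,
    C₀ * edgeLen σ ≤ Metric.infDist (M.circ (M.Kof σ)) (edgeSet σ) ∧
    C₀ * M.meshSize ≤ edgeLen σ

/-- The square of the discrete `H¹` norm `‖·‖_h` on `𝐏₀`. -/
def normhSq (c : P0fun) : ℝ :=
  ∑ σ ∈ M.intEdges, M.tauEdge σ * ‖c (M.Lof σ) - c (M.Kof σ)‖ ^ 2
    + ∑ σ ∈ M.extEdges, M.tauEdge σ * ‖c (M.Kof σ)‖ ^ 2

/-- The discrete `H¹` norm `‖·‖_h` on `𝐏₀`. -/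
def normh (c : P0fun) : ℝ := Real.sqrt (M.normhSq c)

/-- The `L²(Ω)` inner product of two `𝐏₀` functions. -/
def innerP0 (c d : P0fun) : ℝ := ∑ K ∈ M.tris, triArea K * (inner ℝ (c K) (d K) : ℝ)

/-- The `L²(Ω)` norm of a `𝐏₀` function. -/
def normL2P0 (c : P0fun) : ℝ := Real.sqrt (∑ K ∈ M.tris, triArea K * ‖c K‖ ^ 2)

/-- The dual norm `‖·‖_{-1,h}` on `𝐏₀`. -/
def normDual (c : P0fun) : ℝ :=
  sSup { r : ℝ | ∃ ψ : P0fun, M.normh ψ ≠ 0 ∧ r = M.innerP0 c ψ / M.normh ψ }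

/-- The discrete Laplacian `Δ̃_h` on `𝐏₀`. -/
def discLap (c : P0fun) : P0fun := fun K =>
  (triArea K)⁻¹ •
    ((∑ σ ∈ (triEdges K).filter (fun σ => M.isIntEdge σ),
        M.tauEdge σ • (c (M.nbr σ K) - c K))
      - ∑ σ ∈ (triEdges K).filter (fun σ => M.isExtEdge σ), M.tauEdge σ • c K)

/-- The value of the discrete divergence `div_h c` at the midpoint of the edge `σ`. -/
def divhVal (c : P0fun) (σ : Finset E2) : ℝ :=
  if M.isIntEdge σ then
    (3 * edgeLen σ / (triArea (M.Kof σ) + triArea (M.Lof σ))) *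
      (inner ℝ (c (M.Lof σ) - c (M.Kof σ)) (M.nrm (M.Kof σ) σ) : ℝ)
  else
    -(3 * edgeLen σ / triArea (M.Kof σ)) * (inner ℝ (c (M.Kof σ)) (M.nrm (M.Kof σ) σ) : ℝ)

/-- Membership in the Crouzeix–Raviart space `P₁^{nc}` (scalar case): piecewise affine,
continuous at the midpoints of interior edges. -/
def IsCR (q : BrokenS) : Prop :=
  (∀ K ∈ M.tris, IsAffineS (q K)) ∧
  ∀ σ ∈ M.intEdges, q (M.Kof σ) (edgeMid σ) = q (M.Lof σ) (edgeMid σ)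

/-- Membership in `𝐏₁^{nc} = (P₁^{nc})²`. -/
def IsCRV (q : BrokenV) : Prop :=
  (∀ K ∈ M.tris, IsAffineV (q K)) ∧
  ∀ σ ∈ M.intEdges, q (M.Kof σ) (edgeMid σ) = q (M.Lof σ) (edgeMid σ)

/-- `D` is the Crouzeix–Raviart function `div_h c`. -/
def IsDivh (c : P0fun) (D : BrokenS) : Prop :=
  M.IsCR D ∧ ∀ K ∈ M.tris, ∀ σ ∈ triEdges K, D K (edgeMid σ) = M.divhVal c σ

/-- Membership in the lowest-order Raviart–Thomas space `RT₀`: on each triangle of the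
form `a_K + b_K x`, normal component continuous across interior edges, and vanishing
normal component on the boundary. -/
def IsRT0 (w : BrokenV) : Prop :=
  (∀ K ∈ M.tris, ∃ a : E2, ∃ b : ℝ, w K = fun x => a + b • x) ∧
  (∀ σ ∈ M.intEdges, ∀ x ∈ edgeSet σ,
    (inner ℝ (w (M.Kof σ) x) (M.nrm (M.Kof σ) σ) : ℝ) =
      inner ℝ (w (M.Lof σ) x) (M.nrm (M.Kof σ) σ)) ∧
  (∀ σ ∈ M.extEdges, ∀ x ∈ edgeSet σ,
    (inner ℝ (w (M.Kof σ) x) (M.nrm (M.Kof σ) σ) : ℝ) = 0)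

/-- Membership of a `𝐏₀` function in `𝐏₀ ∩ RT₀` : the normal component of the
piecewise-constant field is continuous across interior edges and vanishes on boundary
edges. -/
def P0inRT0 (c : P0fun) : Prop :=
  (∀ σ ∈ M.intEdges,
    (inner ℝ (c (M.Kof σ)) (M.nrm (M.Kof σ) σ) : ℝ) =
      inner ℝ (c (M.Lof σ)) (M.nrm (M.Kof σ) σ)) ∧
  (∀ σ ∈ M.extEdges, (inner ℝ (c (M.Kof σ)) (M.nrm (M.Kof σ) σ) : ℝ) = 0)

/-- The discrete gradient `∇_h` of a broken affine (Crouzeix–Raviart) function: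
on each triangle, the (constant) gradient of the affine piece. -/
def gradh (q : BrokenS) : P0fun := fun K => gradient (q K) (M.circ K)

/-- The upwind convection term `b̃_h(d, c)` for a convecting field `d ∈ 𝐏₀ ∩ RT₀`. -/
def btilde (d c : P0fun) : P0fun := fun K =>
  (triArea K)⁻¹ •
    ∑ σ ∈ (triEdges K).filter (fun σ => M.isIntEdge σ),
      edgeLen σ • ((max (inner ℝ (d K) (M.nrm K σ) : ℝ) 0) • c K
        + (min (inner ℝ (d K) (M.nrm K σ) : ℝ) 0) • c (M.nbr σ K))

/-- The trilinear form `b_h` for a convecting field in `𝐏₀ ∩ RT₀`. -/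
def bform (d c w : P0fun) : ℝ :=
  ∑ K ∈ M.tris, triArea K * (inner ℝ (w K) (M.btilde d c K) : ℝ)

/-- The upwind convection term `b̃_h(u, c)` for a convecting field `u ∈ RT₀`. -/
def btildeRT (u : BrokenV) (c : P0fun) : P0fun := fun K =>
  (triArea K)⁻¹ •
    ∑ σ ∈ (triEdges K).filter (fun σ => M.isIntEdge σ),
      edgeLen σ • ((max (inner ℝ (u K (edgeMid σ)) (M.nrm K σ) : ℝ) 0) • c K
        + (min (inner ℝ (u K (edgeMid σ)) (M.nrm K σ) : ℝ) 0) • c (M.nbr σ K))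

/-- The trilinear form `b_h`. -/
def bformRT (u : BrokenV) (c w : P0fun) : ℝ :=
  ∑ K ∈ M.tris, triArea K * (inner ℝ (w K) (M.btildeRT u c K) : ℝ)

/-- The `L²(Ω)` norm of the piecewise-constant projection error `v - Π̃_{𝐏₀} v`,
where `(Π̃_{𝐏₀} v)|_K = v(x_K)`. -/
def errTildeP0 (g : E2 → E2) : ℝ :=
  Real.sqrt (∑ K ∈ M.tris, ∫ x in triSet K, ‖g x - g (M.circ K)‖ ^ 2)

end FVMesh

/-!
On a triangle `K` the affine function `div_h v_h` is bounded by the sum of the absolute values of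
its three edge-midpoint values (each vertex value is a signed sum of them), so
`∫_K (div_h v_h)² ≤ 3 |K| ∑_{σ ∈ ℰ_K} (div_h v_h)(x_σ)²`. Regrouping the sum over all triangles
edge by edge, an edge `σ` contributes at most `9 |σ|² |[v_h]_σ · n|² / |K_σ|`. Regularity gives
`|K_σ| ≥ C₀ |σ|² / 4`, because `K_σ` contains a parallelogram of area
`|σ| dist(x_{K_σ}, x_σ) / 4`, and `d_σ ≤ (1/2 + 2/C₀) |σ|`, because all circumradii are at most
`|σ| / C₀`. Hence each edge contributes at most `36 (1/2 + 2/C₀) / C₀ · τ_σ |[v_h]_σ|²`.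
-/

section Geometry

open Module Pointwise

variable {F : Type*} [NormedAddCommGroup F] [InnerProductSpace ℝ F] [MeasurableSpace F]
  [BorelSpace F] [FiniteDimensional ℝ F] [Fact (finrank ℝ F = 2)]

theorem volume_parallelepiped_pair (o : Orientation ℝ F (Fin 2)) (u w : F) :
    volume (parallelepiped ![u, w]) = ENNReal.ofReal |o.areaForm u w| := by
  rw [← o.measure_eq_volume, AlternatingMap.measure_parallelepiped, o.areaForm_to_volumeForm]

/-- The parallelogram `a + [0, ½(b - a)] + [0, ½(x - a)]` lies in `S`, and its area is a quarter
of `|ω(b - a, x - a)| = ‖b - a‖ ‖x - m‖`, since `x - m ⊥ b - a` for the midpoint `m` of `[a, b]`. -/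
theorem dist_mul_dist_midpoint_le_volume {S : Set F} (hS : Convex ℝ S) {a b x : F}
    (ha : a ∈ S) (hb : b ∈ S) (hx : x ∈ S) (hab : dist a x = dist b x) :
    ENNReal.ofReal (dist a b * dist x (midpoint ℝ a b) / 4) ≤ volume S := by
  let o : Orientation ℝ F (Fin 2) := (finBasisOfFinrankEq ℝ F Fact.out).orientation
  let P := parallelepiped ![(2⁻¹ : ℝ) • (b - a), (2⁻¹ : ℝ) • (x - a)]
  have horth : inner ℝ (b - a) (x - midpoint ℝ a b) = 0 := by
    rw [real_inner_comm]
    exact EuclideanGeometry.inner_vsub_vsub_of_dist_eq_of_dist_eq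
      (by rw [dist_left_midpoint (𝕜 := ℝ), dist_right_midpoint (𝕜 := ℝ)]) hab
  have harea : o.areaForm (b - a) (x - a) = o.areaForm (b - a) (x - midpoint ℝ a b) := by
    have : x - a = (x - midpoint ℝ a b) + (2⁻¹ : ℝ) • (b - a) := by
      rw [midpoint_eq_smul_add, invOf_eq_inv]; module
    rw [this, map_add, map_smul, o.areaForm_apply_self, smul_zero, add_zero]
  have hsub : a +ᵥ P ⊆ S := by
    rintro _ ⟨_, ⟨t, ht, rfl⟩, rfl⟩
    have hab' := hS.add_smul_sub_mem ha hb ⟨ht.1 0, ht.2 0⟩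
    have hax := hS.add_smul_sub_mem ha hx ⟨ht.1 1, ht.2 1⟩
    convert hS hab' hax (by norm_num : (0:ℝ) ≤ 2⁻¹) (by norm_num : (0:ℝ) ≤ 2⁻¹) (by norm_num)
      using 1
    simp only [Fin.sum_univ_two, Matrix.cons_val_zero, Matrix.cons_val_one, vadd_eq_add]
    module
  calc ENNReal.ofReal (dist a b * dist x (midpoint ℝ a b) / 4)
      = volume P := by
        rw [volume_parallelepiped_pair o]
        congr 1
        simp only [map_smul, LinearMap.smul_apply, smul_eq_mul, harea, abs_mul,
          o.abs_areaForm_of_orthogonal horth]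
        rw [dist_eq_norm', dist_eq_norm]
        norm_num
        ring
    _ = volume (a +ᵥ P) := (measure_vadd _ _ _).symm
    _ ≤ volume S := measure_mono hsub

end Geometry

theorem AffineMap.abs_le_sum_abs_midpoint {V : Type*} [AddCommGroup V] [Module ℝ V]
    (φ : V →ᵃ[ℝ] ℝ) (v : Fin 3 → V) {x : V} (hx : x ∈ convexHull ℝ (Set.range v)) :
    |φ x| ≤ ∑ i, |φ (midpoint ℝ (v (i + 1)) (v (i + 2)))| := by
  set f : Fin 3 → ℝ := fun i => φ (midpoint ℝ (v (i + 1)) (v (i + 2)))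
  have hvertex : ∀ j, φ (v j) = f (j + 1) + f (j + 2) - f j := by
    intro j
    have h11 : j + 1 + 1 = j + 2 := by revert j; decide
    have h12 : j + 1 + 2 = j := by revert j; decide
    have h21 : j + 2 + 1 = j := by revert j; decide
    have h22 : j + 2 + 2 = j + 1 := by revert j; decide
    simp only [f, AffineMap.map_midpoint, h11, h12, h21, h22]
    simp only [midpoint_eq_smul_add, invOf_eq_inv, smul_eq_mul]
    ring
  obtain ⟨_, ⟨j, rfl⟩, hj⟩ :=
    ((convexOn_univ_norm (E := ℝ)).comp_affineMap φ).exists_ge_of_mem_convexHull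
      (Set.subset_univ _) hx
  calc |φ x| ≤ |φ (v j)| := hj
    _ ≤ |f (j + 1)| + |f (j + 2)| + |f j| := by
      rw [hvertex]; exact (abs_sub _ _).trans (by gcongr; exact abs_add_le _ _)
    _ = ∑ i, |f i| := by fin_cases j <;> simp [Fin.sum_univ_three] <;> ring

theorem AffineMap.setIntegral_sq_convexHull_le {V : Type*} [NormedAddCommGroup V]
    [NormedSpace ℝ V] [MeasurableSpace V] (μ : Measure V) [IsFiniteMeasureOnCompacts μ]
    (φ : V →ᵃ[ℝ] ℝ) (v : Fin 3 → V) :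
    ∫ x in convexHull ℝ (Set.range v), φ x ^ 2 ∂μ ≤
      3 * μ.real (convexHull ℝ (Set.range v)) *
        ∑ i, φ (midpoint ℝ (v (i + 1)) (v (i + 2))) ^ 2 := by
  set S := convexHull ℝ (Set.range v)
  set f : Fin 3 → ℝ := fun i => φ (midpoint ℝ (v (i + 1)) (v (i + 2)))
  have hbound : ∀ x ∈ S, ‖φ x ^ 2‖ ≤ (∑ i, |f i|) ^ 2 := fun x hx => by
    rw [Real.norm_eq_abs, abs_pow]
    exact pow_le_pow_left₀ (abs_nonneg _) (φ.abs_le_sum_abs_midpoint v hx) 2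
  have hcs : (∑ i, |f i|) ^ 2 ≤ 3 * ∑ i, f i ^ 2 := by
    simpa [sq_abs] using sq_sum_le_card_mul_sum_sq (s := Finset.univ) (f := fun i => |f i|)
  calc ∫ x in S, φ x ^ 2 ∂μ ≤ ‖∫ x in S, φ x ^ 2 ∂μ‖ := Real.le_norm_self _
    _ ≤ (∑ i, |f i|) ^ 2 * μ.real S :=
      norm_setIntegral_le_of_norm_le_const
        ((Set.finite_range v).isCompact_convexHull (𝕜 := ℝ)).measure_lt_top hbound
    _ ≤ (3 * ∑ i, f i ^ 2) * μ.real S := by gcongr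
    _ = _ := by ring

theorem sq_inner_le_sq_norm {F : Type*} [NormedAddCommGroup F] [InnerProductSpace ℝ F]
    (u : F) {n : F} (hn : ‖n‖ = 1) : inner ℝ u n ^ 2 ≤ ‖u‖ ^ 2 := by
  have h := abs_real_inner_le_norm u n
  rw [hn, mul_one] at h
  exact sq_le_sq' (abs_le.1 h).1 (abs_le.1 h).2

theorem exists_eq_pair_of_mem_triEdges {v : Fin 3 → E2} {σ : Finset E2} (hσ : σ ∈ triEdges v) :
    ∃ i j, i ≠ j ∧ σ = {v i, v j} := by
  simp only [triEdges, Finset.mem_insert, Finset.mem_singleton] at hσ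
  rcases hσ with rfl | rfl | rfl
  exacts [⟨0, 1, by decide, rfl⟩, ⟨1, 2, by decide, rfl⟩, ⟨0, 2, by decide, rfl⟩]

theorem mem_range_of_mem_triEdges {v : Fin 3 → E2} {σ : Finset E2} (hσ : σ ∈ triEdges v)
    {a : E2} (ha : a ∈ σ) : a ∈ Set.range v := by
  obtain ⟨i, j, -, rfl⟩ := exists_eq_pair_of_mem_triEdges hσ
  rcases Finset.mem_insert.1 ha with rfl | ha
  · exact ⟨i, rfl⟩
  rw [Finset.mem_singleton.1 ha]
  exact ⟨j, rfl⟩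

theorem pair_mem_triEdges (v : Fin 3 → E2) (i : Fin 3) : {v (i + 1), v (i + 2)} ∈ triEdges v := by
  fin_cases i <;> simp [triEdges, Finset.pair_comm]

theorem edgeLen_pair (a b : E2) : edgeLen {a, b} = dist a b := by
  rw [edgeLen, Finset.coe_pair, Metric.diam_pair]

theorem edgeMid_pair {a b : E2} (h : a ≠ b) : edgeMid {a, b} = midpoint ℝ a b := by
  rw [edgeMid, Finset.sum_pair h, midpoint_eq_smul_add, invOf_eq_inv]

theorem midpoint_mem_edgeSet (a b : E2) : midpoint ℝ a b ∈ edgeSet {a, b} := by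
  rw [edgeSet, Finset.coe_pair, convexHull_pair]
  exact midpoint_mem_segment a b

theorem sum_triEdges {v : Fin 3 → E2} (hv : Function.Injective v) (f : Finset E2 → ℝ) :
    ∑ σ ∈ triEdges v, f σ = ∑ i, f {v (i + 1), v (i + 2)} := by
  have h01 := hv.ne (show (0 : Fin 3) ≠ 1 by decide)
  have h02 := hv.ne (show (0 : Fin 3) ≠ 2 by decide)
  have h12 := hv.ne (show (1 : Fin 3) ≠ 2 by decide)
  rw [triEdges, Finset.sum_insert, Finset.sum_insert, Finset.sum_singleton, Fin.sum_univ_three]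
  · simp only [Fin.isValue, Fin.reduceAdd, Finset.pair_comm (v 2)]
    ring
  · exact Finset.notMem_singleton.2 (ne_of_mem_of_not_mem' (Finset.mem_insert_self _ _)
      (by simp [h01.symm, h12]))
  · simp only [Finset.mem_insert, Finset.mem_singleton, not_or]
    exact ⟨ne_of_mem_of_not_mem' (Finset.mem_insert_self _ _) (by simp [h01, h02]),
      ne_of_mem_of_not_mem' (Finset.mem_insert_of_mem (Finset.mem_singleton_self _))
        (by simp [h01.symm, h12])⟩

theorem triArea_ge {v : Fin 3 → E2} {a b x : E2} (ha : a ∈ triSet v) (hb : b ∈ triSet v)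
    (hx : x ∈ triSet v) (hab : dist a x = dist b x) :
    dist a b * dist x (midpoint ℝ a b) / 4 ≤ triArea v := by
  have : Fact (Module.finrank ℝ E2 = 2) := ⟨finrank_euclideanSpace_fin⟩
  have hfin : volume (triSet v) ≠ ⊤ :=
    ((Set.finite_range v).isCompact_convexHull (𝕜 := ℝ)).measure_lt_top.ne
  rw [triArea, ← ENNReal.ofReal_le_iff_le_toReal hfin]
  exact dist_mul_dist_midpoint_le_volume (convex_convexHull ℝ _) ha hb hx hab

namespace FVMesh

variable {Ω : Set E2} {M : FVMesh Ω} {C₀ : ℝ}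

theorem Kof_spec {σ : Finset E2} (hσ : σ ∈ M.edges) :
    M.Kof σ ∈ M.tris ∧ σ ∈ triEdges (M.Kof σ) := by
  have h : ∃ v, v ∈ M.tris ∧ σ ∈ triEdges v := by simpa [edges] using hσ
  rw [Kof, dif_pos h]
  exact h.choose_spec

theorem Lof_spec {σ : Finset E2} (hσ : M.isIntEdge σ) :
    M.Lof σ ∈ M.tris ∧ σ ∈ triEdges (M.Lof σ) ∧ M.Lof σ ≠ M.Kof σ := by
  have h : ∃ w, w ∈ M.tris ∧ σ ∈ triEdges w ∧ w ≠ M.Kof σ := by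
    obtain ⟨x, hx, y, hy, hxy⟩ := Finset.one_lt_card.1 (hσ.2 ▸ one_lt_two)
    rw [Finset.mem_filter] at hx hy
    by_cases hxK : x = M.Kof σ
    · exact ⟨y, hy.1, hy.2, fun h => hxy (hxK.trans h.symm)⟩
    · exact ⟨x, hx.1, hx.2, hxK⟩
  rw [Lof, nbr, dif_pos h]
  exact h.choose_spec

theorem filter_mem_triEdges_eq_pair {σ : Finset E2} {K L : Fin 3 → E2} (hK : K ∈ M.tris)
    (hKσ : σ ∈ triEdges K) (hL : L ∈ M.tris) (hLσ : σ ∈ triEdges L) (hKL : K ≠ L) :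
    M.tris.filter (σ ∈ triEdges ·) = {K, L} := by
  refine (Finset.eq_of_subset_of_card_le ?_ ?_).symm
  · simp [Finset.insert_subset_iff, hK, hKσ, hL, hLσ]
  · rw [Finset.card_pair hKL]
    rcases M.edge_count K hK σ hKσ with h | h <;> omega

theorem filter_mem_triEdges_eq_Kof_Lof {σ : Finset E2} (hσ : M.isIntEdge σ) :
    M.tris.filter (σ ∈ triEdges ·) = {M.Kof σ, M.Lof σ} :=
  have ⟨hK, hKσ⟩ := Kof_spec hσ.1
  have ⟨hL, hLσ, hLK⟩ := Lof_spec hσ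
  filter_mem_triEdges_eq_pair hK hKσ hL hLσ hLK.symm

theorem filter_mem_triEdges_eq_Kof {σ : Finset E2} (hσ : M.isExtEdge σ) :
    M.tris.filter (σ ∈ triEdges ·) = {M.Kof σ} := by
  obtain ⟨K, hK⟩ := Finset.card_eq_one.1 hσ.2
  have hmem : M.Kof σ ∈ M.tris.filter (σ ∈ triEdges ·) :=
    Finset.mem_filter.2 (Kof_spec hσ.1)
  rw [hK, Finset.mem_singleton] at hmem
  rw [hK, hmem]

theorem isExtEdge_iff_not_isIntEdge {σ : Finset E2} (hσ : σ ∈ M.edges) :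
    M.isExtEdge σ ↔ ¬ M.isIntEdge σ := by
  have ⟨hK, hKσ⟩ := Kof_spec hσ
  rcases M.edge_count _ hK σ hKσ with h | h <;> simp [isExtEdge, isIntEdge, hσ, h]

variable (M) in
theorem sum_tris_sum_triEdges (g : (Fin 3 → E2) → Finset E2 → ℝ) :
    ∑ K ∈ M.tris, ∑ σ ∈ triEdges K, g K σ =
      ∑ σ ∈ M.intEdges, (g (M.Kof σ) σ + g (M.Lof σ) σ) + ∑ σ ∈ M.extEdges, g (M.Kof σ) σ := by
  rw [Finset.sum_comm' (t' := M.edges) (s' := fun σ => M.tris.filter (σ ∈ triEdges ·))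
      (fun K σ => by simp only [edges, Finset.mem_filter, Finset.mem_biUnion]; tauto),
    ← Finset.sum_filter_add_sum_filter_not M.edges (M.isIntEdge ·)]
  congr 1
  · refine Finset.sum_congr rfl fun σ hσ => ?_
    have hσ := (Finset.mem_filter.1 hσ).2
    rw [filter_mem_triEdges_eq_Kof_Lof hσ, Finset.sum_pair (Lof_spec hσ).2.2.symm]
  · refine Finset.sum_congr ?_ fun σ hσ => ?_
    · ext σ
      simp only [extEdges, Finset.mem_filter]
      exact and_congr_right fun hσ => (isExtEdge_iff_not_isIntEdge hσ).symm
    · rw [filter_mem_triEdges_eq_Kof (Finset.mem_filter.1 hσ).2, Finset.sum_singleton]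

theorem exists_pair_of_mem_triEdges {K : Fin 3 → E2} {σ : Finset E2} (hK : K ∈ M.tris)
    (hσ : σ ∈ triEdges K) : ∃ i j, K i ≠ K j ∧ σ = {K i, K j} := by
  obtain ⟨i, j, hij, rfl⟩ := exists_eq_pair_of_mem_triEdges hσ
  exact ⟨i, j, (M.indep K hK).injective.ne hij, rfl⟩

theorem edgeLen_pos {K : Fin 3 → E2} {σ : Finset E2} (hK : K ∈ M.tris) (hσ : σ ∈ triEdges K) :
    0 < edgeLen σ := by
  obtain ⟨i, j, hij, rfl⟩ := exists_pair_of_mem_triEdges hK hσ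
  rw [edgeLen_pair]
  exact dist_pos.2 hij

theorem edgeMid_mem_edgeSet {K : Fin 3 → E2} {σ : Finset E2} (hK : K ∈ M.tris)
    (hσ : σ ∈ triEdges K) : edgeMid σ ∈ edgeSet σ := by
  obtain ⟨i, j, hij, rfl⟩ := exists_pair_of_mem_triEdges hK hσ
  rw [edgeMid_pair hij]
  exact midpoint_mem_edgeSet _ _

theorem dist_circ_le_meshSize {K : Fin 3 → E2} (hK : K ∈ M.tris) (i : Fin 3) :
    dist (M.circ K) (K i) ≤ M.meshSize :=
  (M.circ_equidist K hK i 0).trans_le <|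
    le_ciSup (Set.finite_range fun L : M.tris => M.circumradius L).bddAbove ⟨K, hK⟩

theorem circ_ne_vertex {K : Fin 3 → E2} (hK : K ∈ M.tris) (i : Fin 3) : M.circ K ≠ K i := by
  intro h
  have hzero : ∀ j, K j = M.circ K := fun j =>
    (dist_eq_zero.1 ((M.circ_equidist K hK j i).trans (by rw [h, dist_self]))).symm
  exact (M.indep K hK).injective.ne (show (0 : Fin 3) ≠ 1 by decide) (by rw [hzero, hzero])

theorem edgeLen_mul_dist_circ_edgeMid_le_triArea {K : Fin 3 → E2} {σ : Finset E2}
    (hK : K ∈ M.tris) (hσ : σ ∈ triEdges K) :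
    edgeLen σ * dist (M.circ K) (edgeMid σ) / 4 ≤ triArea K := by
  obtain ⟨i, j, hij, rfl⟩ := exists_pair_of_mem_triEdges hK hσ
  rw [edgeLen_pair, edgeMid_pair hij]
  refine triArea_ge (subset_convexHull ℝ _ ⟨i, rfl⟩) (subset_convexHull ℝ _ ⟨j, rfl⟩)
    (M.circ_mem _ hK) ?_
  rw [dist_comm, M.circ_equidist _ hK i j, dist_comm]

theorem dist_circ_circ_le {K L : Fin 3 → E2} {σ : Finset E2} (hK : K ∈ M.tris)
    (hKσ : σ ∈ triEdges K) (hL : L ∈ M.tris) (hLσ : σ ∈ triEdges L) :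
    dist (M.circ K) (M.circ L) ≤ 2 * M.meshSize := by
  obtain ⟨i, j, -, rfl⟩ := exists_pair_of_mem_triEdges hK hKσ
  obtain ⟨i', hi'⟩ := mem_range_of_mem_triEdges hLσ (Finset.mem_insert_self (K i) {K j})
  calc dist (M.circ K) (M.circ L) ≤ dist (M.circ K) (K i) + dist (M.circ L) (K i) :=
        dist_triangle_right _ _ _
    _ ≤ M.meshSize + M.meshSize :=
        add_le_add (dist_circ_le_meshSize hK i) (hi' ▸ dist_circ_le_meshSize hL i')
    _ = 2 * M.meshSize := by ring

theorem dist_edgeMid_circ_le {K : Fin 3 → E2} {σ : Finset E2} (hK : K ∈ M.tris)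
    (hσ : σ ∈ triEdges K) : dist (edgeMid σ) (M.circ K) ≤ edgeLen σ / 2 + M.meshSize := by
  obtain ⟨i, j, hij, rfl⟩ := exists_pair_of_mem_triEdges hK hσ
  calc dist (edgeMid {K i, K j}) (M.circ K)
      ≤ dist (edgeMid {K i, K j}) (K i) + dist (M.circ K) (K i) := dist_triangle_right _ _ _
    _ ≤ edgeLen {K i, K j} / 2 + M.meshSize := by
        gcongr
        · rw [edgeMid_pair hij, edgeLen_pair, dist_comm, dist_left_midpoint (𝕜 := ℝ)]
          norm_num [div_eq_inv_mul]
        · exact dist_circ_le_meshSize hK i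

theorem regular.meshSize_le (hreg : M.regular C₀) (hC₀ : 0 < C₀) {σ : Finset E2}
    (hσ : σ ∈ M.edges) : M.meshSize ≤ edgeLen σ / C₀ := by
  rw [le_div_iff₀ hC₀, mul_comm]
  exact (hreg σ hσ).2

theorem regular.le_dist_circ_edgeMid (hreg : M.regular C₀) {σ : Finset E2} (hσ : σ ∈ M.edges) :
    C₀ * edgeLen σ ≤ dist (M.circ (M.Kof σ)) (edgeMid σ) :=
  have ⟨hK, hKσ⟩ := Kof_spec hσ
  (hreg σ hσ).1.trans (Metric.infDist_le_dist_of_mem (edgeMid_mem_edgeSet hK hKσ))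

theorem regular.circ_Kof_not_mem_edgeSet (hreg : M.regular C₀) (hC₀ : 0 < C₀)
    {σ : Finset E2} (hσ : σ ∈ M.edges) : M.circ (M.Kof σ) ∉ edgeSet σ := by
  intro h
  have ⟨hK, hKσ⟩ := Kof_spec hσ
  have := (hreg σ hσ).1
  rw [Metric.infDist_zero_of_mem h] at this
  exact (mul_pos hC₀ (edgeLen_pos hK hKσ)).not_ge this

/-- A common circumcenter would lie in `K_σ ∩ L_σ`: not at a vertex, and not on a common edge `τ`
either, since regularity keeps the circumcenter of `K_τ ∈ {K_σ, L_σ}` away from `τ`. -/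
theorem regular.circ_Kof_ne_circ_Lof (hreg : M.regular C₀) (hC₀ : 0 < C₀) {σ : Finset E2}
    (hσ : M.isIntEdge σ) : M.circ (M.Kof σ) ≠ M.circ (M.Lof σ) := by
  intro heq
  have ⟨hK, hKσ⟩ := Kof_spec hσ.1
  have ⟨hL, hLσ, hLK⟩ := Lof_spec hσ
  have hmem : M.circ (M.Kof σ) ∈ triSet (M.Kof σ) ∩ triSet (M.Lof σ) :=
    ⟨M.circ_mem _ hK, heq ▸ M.circ_mem _ hL⟩
  rcases M.conform _ hK _ hL hLK.symm with hempty | ⟨p, ⟨i, rfl⟩, -, hvertex⟩ |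
      ⟨τ, hKτ, hLτ, hedge⟩
  · rw [hempty] at hmem; exact hmem
  · rw [hvertex] at hmem; exact circ_ne_vertex hK i hmem
  · have hτ : τ ∈ M.edges := Finset.mem_biUnion.2 ⟨_, hK, hKτ⟩
    have hKof : M.Kof τ ∈ ({M.Kof σ, M.Lof σ} : Finset _) := by
      rw [← filter_mem_triEdges_eq_pair hK hKτ hL hLτ hLK.symm]
      exact Finset.mem_filter.2 (Kof_spec hτ)
    rw [hedge] at hmem
    apply hreg.circ_Kof_not_mem_edgeSet hC₀ hτ
    rcases Finset.mem_insert.1 hKof with h | h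
    · rwa [h]
    · rwa [Finset.mem_singleton.1 h, ← heq]

theorem regular.area_Kof_ge (hreg : M.regular C₀) {σ : Finset E2} (hσ : σ ∈ M.edges) :
    C₀ * edgeLen σ ^ 2 / 4 ≤ triArea (M.Kof σ) := by
  have ⟨hK, hKσ⟩ := Kof_spec hσ
  refine le_trans ?_ (edgeLen_mul_dist_circ_edgeMid_le_triArea hK hKσ)
  have := hreg.le_dist_circ_edgeMid hσ
  have := (edgeLen_pos hK hKσ).le
  nlinarith

theorem regular.dEdge_le (hreg : M.regular C₀) (hC₀ : 0 < C₀) {σ : Finset E2}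
    (hσ : σ ∈ M.edges) : M.dEdge σ ≤ (2⁻¹ + 2 / C₀) * edgeLen σ := by
  have ⟨hK, hKσ⟩ := Kof_spec hσ
  have hh := hreg.meshSize_le hC₀ hσ
  have hℓ := (edgeLen_pos hK hKσ).le
  have hℓC₀ : 0 ≤ edgeLen σ / C₀ := div_nonneg hℓ hC₀.le
  have : (2⁻¹ + 2 / C₀) * edgeLen σ = edgeLen σ / 2 + 2 * (edgeLen σ / C₀) := by ring
  rw [dEdge]
  split_ifs with hint
  · obtain ⟨hL, hLσ, -⟩ := Lof_spec hint
    have := dist_circ_circ_le hK hKσ hL hLσ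
    linarith
  · have := dist_edgeMid_circ_le hK hKσ
    linarith

/-- `tauEdge` divides by `dEdge`, so this is what keeps `τ_σ` away from the junk value `0`. -/
theorem regular.dEdge_pos (hreg : M.regular C₀) (hC₀ : 0 < C₀) {σ : Finset E2}
    (hσ : σ ∈ M.edges) : 0 < M.dEdge σ := by
  rw [dEdge]
  split_ifs with hint
  · exact dist_pos.2 (hreg.circ_Kof_ne_circ_Lof hC₀ hint)
  · have ⟨hK, hKσ⟩ := Kof_spec hσ
    rw [dist_comm]
    exact (mul_pos hC₀ (edgeLen_pos hK hKσ)).trans_le (hreg.le_dist_circ_edgeMid hσ)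

theorem regular.mul_sq_le_tauEdge_mul (hreg : M.regular C₀) (hC₀ : 0 < C₀) {σ : Finset E2}
    (hσ : σ ∈ M.edges) {A t n : ℝ} (hA : triArea (M.Kof σ) ≤ A) (ht : t ^ 2 ≤ n) :
    A * (3 * edgeLen σ / A * t) ^ 2 ≤ 36 * (2⁻¹ + 2 / C₀) / C₀ * (M.tauEdge σ * n) := by
  have ⟨hK, hKσ⟩ := Kof_spec hσ
  have hℓ := edgeLen_pos hK hKσ
  have hd := hreg.dEdge_pos hC₀ hσ
  have hdle := hreg.dEdge_le hC₀ hσ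
  have hA' : C₀ * edgeLen σ ^ 2 / 4 ≤ A := (hreg.area_Kof_ge hσ).trans hA
  have hApos : 0 < A := (by positivity : 0 < C₀ * edgeLen σ ^ 2 / 4).trans_le hA'
  have hn : 0 ≤ n := (sq_nonneg t).trans ht
  calc A * (3 * edgeLen σ / A * t) ^ 2 = 9 * edgeLen σ ^ 2 * t ^ 2 / A := by
        field_simp; ring
    _ ≤ 9 * edgeLen σ ^ 2 * n / (C₀ * edgeLen σ ^ 2 / 4) := by gcongr
    _ = 36 / C₀ * n * 1 := by field_simp; ring
    _ ≤ 36 / C₀ * n * ((2⁻¹ + 2 / C₀) * edgeLen σ / M.dEdge σ) := by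
        gcongr; rwa [one_le_div hd]
    _ = 36 * (2⁻¹ + 2 / C₀) / C₀ * (M.tauEdge σ * n) := by rw [tauEdge]; ring

theorem regular.divhVal_sq_intEdge_le (hreg : M.regular C₀) (hC₀ : 0 < C₀) (c : P0fun)
    {σ : Finset E2} (hσ : σ ∈ M.intEdges) :
    triArea (M.Kof σ) * M.divhVal c σ ^ 2 + triArea (M.Lof σ) * M.divhVal c σ ^ 2 ≤
      36 * (2⁻¹ + 2 / C₀) / C₀ * (M.tauEdge σ * ‖c (M.Lof σ) - c (M.Kof σ)‖ ^ 2) := by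
  have ⟨hσ, hint⟩ := Finset.mem_filter.1 hσ
  have ⟨hK, hKσ⟩ := Kof_spec hσ
  rw [← add_mul, divhVal, if_pos hint]
  exact hreg.mul_sq_le_tauEdge_mul hC₀ hσ (le_add_of_nonneg_right ENNReal.toReal_nonneg)
    (sq_inner_le_sq_norm _ (M.nrm_unit _ hK _ hKσ))

theorem regular.divhVal_sq_extEdge_le (hreg : M.regular C₀) (hC₀ : 0 < C₀) (c : P0fun)
    {σ : Finset E2} (hσ : σ ∈ M.extEdges) :
    triArea (M.Kof σ) * M.divhVal c σ ^ 2 ≤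
      36 * (2⁻¹ + 2 / C₀) / C₀ * (M.tauEdge σ * ‖c (M.Kof σ)‖ ^ 2) := by
  have ⟨hσ, hext⟩ := Finset.mem_filter.1 hσ
  have ⟨hK, hKσ⟩ := Kof_spec hσ
  rw [divhVal, if_neg ((isExtEdge_iff_not_isIntEdge hσ).1 hext), neg_mul, ← mul_neg]
  exact hreg.mul_sq_le_tauEdge_mul hC₀ hσ le_rfl
    ((neg_sq _).trans_le (sq_inner_le_sq_norm _ (M.nrm_unit _ hK _ hKσ)))

theorem IsDivh.setIntegral_sq_le {c : P0fun} {D : BrokenS} (hD : M.IsDivh c D)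
    {K : Fin 3 → E2} (hK : K ∈ M.tris) :
    ∫ x in triSet K, D K x ^ 2 ≤ 3 * ∑ σ ∈ triEdges K, triArea K * M.divhVal c σ ^ 2 := by
  obtain ⟨φ, hφ⟩ := hD.1.1 K hK
  have hinj := (M.indep K hK).injective
  have hmid : ∀ i, φ (midpoint ℝ (K (i + 1)) (K (i + 2))) = M.divhVal c {K (i + 1), K (i + 2)} :=
    fun i => by
      rw [← edgeMid_pair (hinj.ne (by revert i; decide)), ← hφ]
      exact hD.2 K hK _ (pair_mem_triEdges K i)
  calc ∫ x in triSet K, D K x ^ 2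
      ≤ 3 * volume.real (triSet K) * ∑ i, φ (midpoint ℝ (K (i + 1)) (K (i + 2))) ^ 2 := by
        rw [hφ]; exact φ.setIntegral_sq_convexHull_le volume K
    _ = 3 * ∑ σ ∈ triEdges K, triArea K * M.divhVal c σ ^ 2 := by
        rw [← Finset.mul_sum, sum_triEdges hinj (fun σ => M.divhVal c σ ^ 2)]
        simp only [hmid, triArea, Measure.real]
        ring

end FVMesh

theorem stmt9_general (Ω : Set E2) (C₀ : ℝ) (hC₀ : 0 < C₀) :
    ∃ C > (0:ℝ), ∀ M : FVMesh Ω, M.regular C₀ →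
      ∀ c : P0fun, ∀ D : BrokenS, M.IsDivh c D →
        Real.sqrt (∑ K ∈ M.tris, ∫ x in triSet K, (D K x) ^ 2) ≤ C * M.normh c := by
  set C₁ := 36 * (2⁻¹ + 2 / C₀) / C₀
  refine ⟨√(3 * C₁), by positivity, fun M hreg c D hD => ?_⟩
  have hsum : ∑ K ∈ M.tris, ∫ x in triSet K, D K x ^ 2 ≤ 3 * C₁ * M.normhSq c :=
    calc ∑ K ∈ M.tris, ∫ x in triSet K, D K x ^ 2
        ≤ ∑ K ∈ M.tris, 3 * ∑ σ ∈ triEdges K, triArea K * M.divhVal c σ ^ 2 :=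
          Finset.sum_le_sum fun K hK => hD.setIntegral_sq_le hK
      _ = 3 * (∑ σ ∈ M.intEdges, (triArea (M.Kof σ) * M.divhVal c σ ^ 2 +
            triArea (M.Lof σ) * M.divhVal c σ ^ 2) +
          ∑ σ ∈ M.extEdges, triArea (M.Kof σ) * M.divhVal c σ ^ 2) := by
          rw [← Finset.mul_sum, M.sum_tris_sum_triEdges]
      _ ≤ 3 * (∑ σ ∈ M.intEdges, C₁ * (M.tauEdge σ * ‖c (M.Lof σ) - c (M.Kof σ)‖ ^ 2) +
          ∑ σ ∈ M.extEdges, C₁ * (M.tauEdge σ * ‖c (M.Kof σ)‖ ^ 2)) := by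
          gcongr 3 * (?_ + ?_)
          · exact Finset.sum_le_sum fun σ hσ => hreg.divhVal_sq_intEdge_le hC₀ c hσ
          · exact Finset.sum_le_sum fun σ hσ => hreg.divhVal_sq_extEdge_le hC₀ c hσ
      _ = 3 * C₁ * M.normhSq c := by
          rw [FVMesh.normhSq, ← Finset.mul_sum, ← Finset.mul_sum]; ring
  calc √(∑ K ∈ M.tris, ∫ x in triSet K, D K x ^ 2) ≤ √(3 * C₁ * M.normhSq c) :=
        Real.sqrt_le_sqrt hsum
    _ = √(3 * C₁) * M.normh c := by rw [FVMesh.normh, Real.sqrt_mul (by positivity)]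

/-- Proposition 5: stability of the discrete divergence,
`|div_h v_h|_{L²} ≤ C ‖v_h‖_h`. -/
theorem stmt9 (Ω : Set E2) (hΩo : IsOpen Ω) (hΩb : Bornology.IsBounded Ω)
    (C₀ : ℝ) (hC₀ : 0 < C₀) :
    ∃ C > (0:ℝ), ∀ M : FVMesh Ω, M.regular C₀ →
      ∀ c : P0fun, ∀ D : BrokenS, M.IsDivh c D →
        Real.sqrt (∑ K ∈ M.tris, ∫ x in triSet K, (D K x) ^ 2) ≤ C * M.normh c :=
  stmt9_general Ω C₀ hC₀

end
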